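/- For every n ≥ 2, the (non-logarithmic) Shannon OR-capacity of the Mycielskian of K_n satisfies C_OR(M(K_n)) ≥ (n^n + 1)^(1/n) > n = C_OR(K_n). -/

import Mathlib

/-- The `t`-th OR-power of a simple graph. -/
def ORpow {V : Type*} (G : SimpleGraph V) (t : ℕ) : SimpleGraph (Fin t → V) where
  Adj x y := ∃ i, G.Adj (x i) (y i)
  symm := ⟨fun _ _ ⟨i, h⟩ => ⟨i, h.symm⟩⟩
  loopless := ⟨fun _ ⟨_, h⟩ => G.loopless.irrefl _ h⟩

/-- The Mycielskian `M(G)`: vertex set `V(G) × {0,1} ∪ {z}`, with edges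
`{(v,0),(w,i)}` for `{v,w} ∈ E(G)`, `i ∈ {0,1}`, and `{z,(v,1)}` for all `v`. -/
def mycielskian {V : Type*} (G : SimpleGraph V) : SimpleGraph (V × Bool ⊕ Unit) where
  Adj x y :=
    match x, y with
    | Sum.inl (v, a), Sum.inl (w, b) => G.Adj v w ∧ (a = false ∨ b = false)
    | Sum.inl (_, b), Sum.inr _ => b = true
    | Sum.inr _, Sum.inl (_, b) => b = true
    | Sum.inr _, Sum.inr _ => False
  symm := by
    constructor
    rintro (⟨v, a⟩ | ⟨⟩) (⟨w, b⟩ | ⟨⟩) h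
    · exact ⟨h.1.symm, h.2.symm⟩
    · exact h
    · exact h
    · exact h.elim
  loopless := by
    constructor
    rintro (⟨v, a⟩ | ⟨⟩) h
    · exact G.loopless.irrefl v h.1
    · exact h.elim



open SimpleGraph Finset

lemma ORpow_adj {V : Type*} {G : SimpleGraph V} {t : ℕ} {x y : Fin t → V} :
    (ORpow G t).Adj x y ↔ ∃ i, G.Adj (x i) (y i) := Iff.rfl

lemma cliqueNum_ORpow_add {V : Type*} [Fintype V] (G : SimpleGraph V) (s t : ℕ) :
    (ORpow G s).cliqueNum * (ORpow G t).cliqueNum ≤ (ORpow G (s + t)).cliqueNum := by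
  classical
  obtain ⟨S, hS⟩ := (ORpow G s).exists_isNClique_cliqueNum
  obtain ⟨T, hT⟩ := (ORpow G t).exists_isNClique_cliqueNum
  set F : (Fin s → V) × (Fin t → V) → (Fin (s + t) → V) := fun p => Fin.append p.1 p.2 with hF
  have hinj : Function.Injective F := by
    rintro ⟨x1, y1⟩ ⟨x2, y2⟩ h
    have h1 : x1 = x2 := funext fun i => by
      have := congrFun h (Fin.castAdd t i); simpa [hF, Fin.append_left] using this
    have h2 : y1 = y2 := funext fun i => by
      have := congrFun h (Fin.natAdd s i); simpa [hF, Fin.append_right] using this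
    simp [h1, h2]
  have hclique : (ORpow G (s + t)).IsClique ((S ×ˢ T).image F : Finset (Fin (s+t) → V)) := by
    intro a ha b hb hab
    simp only [coe_image, Set.mem_image, mem_coe, mem_product] at ha hb
    obtain ⟨⟨x1, y1⟩, ⟨hx1, hy1⟩, rfl⟩ := ha
    obtain ⟨⟨x2, y2⟩, ⟨hx2, hy2⟩, rfl⟩ := hb
    by_cases hx : x1 = x2
    · have hy : y1 ≠ y2 := by rintro rfl; exact hab (by rw [hx])
      obtain ⟨i, hi⟩ := hT.isClique hy1 hy2 hy
      exact ⟨Fin.natAdd s i, by simpa [hF, Fin.append_right] using hi⟩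
    · obtain ⟨i, hi⟩ := hS.isClique hx1 hx2 hx
      exact ⟨Fin.castAdd t i, by simpa [hF, Fin.append_left] using hi⟩
  calc (ORpow G s).cliqueNum * (ORpow G t).cliqueNum
      = ((S ×ˢ T).image F).card := by
        rw [Finset.card_image_of_injective _ hinj, Finset.card_product, hS.card_eq, hT.card_eq]
    _ ≤ _ := hclique.card_le_cliqueNum

lemma cliqueNum_ORpow_mul {V : Type*} [Fintype V] (G : SimpleGraph V) (m k : ℕ) :
    (ORpow G m).cliqueNum ^ k ≤ (ORpow G (m * k)).cliqueNum := by
  classical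
  induction k with
  | zero =>
    simp only [pow_zero, Nat.mul_zero]
    have : (ORpow G 0).IsClique ({(Fin.elim0 : Fin 0 → V)} : Finset (Fin 0 → V)) := by
      simp [Set.Pairwise]
    calc 1 = ({(Fin.elim0 : Fin 0 → V)} : Finset (Fin 0 → V)).card := by simp
      _ ≤ _ := this.card_le_cliqueNum
  | succ k ih =>
    rw [Nat.mul_succ, pow_succ]
    calc (ORpow G m).cliqueNum ^ k * (ORpow G m).cliqueNum
        ≤ (ORpow G (m * k)).cliqueNum * (ORpow G m).cliqueNum := Nat.mul_le_mul_right _ ih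
      _ ≤ _ := cliqueNum_ORpow_add G (m * k) m

open SimpleGraph Finset

lemma myc_cliqueNum (n : ℕ) (hn : 2 ≤ n) :
    n ^ n + 1 ≤ (ORpow (mycielskian (completeGraph (Fin n))) n).cliqueNum := by
  classical
  haveI : NeZero n := ⟨by omega⟩
  set σ : (Fin n → Fin n) → ZMod n := fun f => ∑ i, ((f i : ℕ) : ZMod n) with hσdef
  set u : (Fin n → Fin n) → (Fin n → (Fin n × Bool ⊕ Unit)) :=
    fun f i => Sum.inl (f i, decide (((i : ℕ) : ZMod n) = σ f)) with hudef
  set w : Fin n → (Fin n × Bool ⊕ Unit) := fun _ => Sum.inr () with hwdef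
  -- injectivity of the Fin n → ZMod n cast
  have castinj : ∀ a b : Fin n, ((a : ℕ) : ZMod n) = ((b : ℕ) : ZMod n) → a = b := by
    intro a b h
    have := congrArg ZMod.val h
    rw [ZMod.val_cast_of_lt a.isLt, ZMod.val_cast_of_lt b.isLt] at this
    exact Fin.ext this
  have huinj : Function.Injective u := by
    intro f g h
    funext i
    have := congrFun h i
    simp only [hudef, Sum.inl.injEq, Prod.mk.injEq] at this
    exact this.1
  have hwne : ∀ f, u f ≠ w := by
    intro f h
    have := congrFun h ⟨0, by omega⟩
    simp [hudef, hwdef] at this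
  -- adjacency between distinct u f and u g
  have hadj : ∀ f g, f ≠ g →
      (ORpow (mycielskian (completeGraph (Fin n))) n).Adj (u f) (u g) := by
    intro f g hfg
    by_cases hσ : σ f = σ g
    · -- find a differing coordinate i with (i : ZMod n) ≠ σ f
      have : ∃ i, f i ≠ g i ∧ ((i : ℕ) : ZMod n) ≠ σ f := by
        by_contra hcon
        push_neg at hcon
        -- all differing coordinates have cast = σ f; there is at most one such coordinate
        have key : ∀ i j : Fin n, f i ≠ g i → f j ≠ g j → i = j := by
          intro i j hi hj
          exact castinj i j ((hcon i hi).trans (hcon j hj).symm)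
        obtain ⟨i0, hi0⟩ : ∃ i, f i ≠ g i := Function.ne_iff.mp hfg
        have hagree : ∀ i, i ≠ i0 → f i = g i := by
          intro i hi
          by_contra h
          exact hi (key i i0 h hi0)
        -- compare the sums
        have hsum : ((f i0 : ℕ) : ZMod n) = ((g i0 : ℕ) : ZMod n) := by
          have h1 : σ f = ((f i0 : ℕ) : ZMod n) + ∑ i ∈ univ.erase i0, ((f i : ℕ) : ZMod n) :=
            (Finset.add_sum_erase _ _ (mem_univ i0)).symm
          have h2 : σ g = ((g i0 : ℕ) : ZMod n) + ∑ i ∈ univ.erase i0, ((g i : ℕ) : ZMod n) :=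
            (Finset.add_sum_erase _ _ (mem_univ i0)).symm
          have h3 : ∑ i ∈ univ.erase i0, ((f i : ℕ) : ZMod n)
              = ∑ i ∈ univ.erase i0, ((g i : ℕ) : ZMod n) :=
            Finset.sum_congr rfl fun i hi => by
              rw [hagree i (Finset.ne_of_mem_erase hi)]
          have := hσ
          rw [h1, h2, h3] at this
          exact add_right_cancel this
        exact hi0 (castinj _ _ hsum)
      obtain ⟨i, hi1, hi2⟩ := this
      refine ⟨i, ?_, Or.inl ?_⟩
      · exact fun h => hi1 (by exact h)
      · simp [hi2]
    · obtain ⟨i, hi⟩ := Function.ne_iff.mp hfg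
      refine ⟨i, fun h => hi h, ?_⟩
      by_cases h1 : ((i : ℕ) : ZMod n) = σ f
      · have h2 : ((i : ℕ) : ZMod n) ≠ σ g := fun h => hσ (h1.symm.trans h)
        exact Or.inr (by simp [h2])
      · exact Or.inl (by simp [h1])
  -- adjacency between u f and w
  have hadjw : ∀ f, (ORpow (mycielskian (completeGraph (Fin n))) n).Adj (u f) w := by
    intro f
    refine ⟨⟨(σ f).val, ZMod.val_lt _⟩, ?_⟩
    show (decide (((((⟨(σ f).val, ZMod.val_lt _⟩ : Fin n) : ℕ)) : ZMod n) = σ f)) = true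
    simp [ZMod.natCast_zmod_val]
  -- the clique
  set C : Finset (Fin n → (Fin n × Bool ⊕ Unit)) := insert w (univ.image u) with hC
  have hclique : (ORpow (mycielskian (completeGraph (Fin n))) n).IsClique (C : Set _) := by
    intro a ha b hb hab
    simp only [hC, coe_insert, Set.mem_insert_iff, coe_image, Set.mem_image, mem_coe,
      mem_univ, coe_univ, Set.image_univ, Set.mem_range] at ha hb
    rcases ha with rfl | ⟨f, rfl⟩ <;> rcases hb with rfl | ⟨g, rfl⟩
    · exact absurd rfl hab
    · exact (hadjw g).symm
    · exact hadjw f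
    · exact hadj f g (fun h => hab (by rw [h]))
  have hcard : C.card = n ^ n + 1 := by
    rw [hC, Finset.card_insert_of_notMem (by
      simp only [Finset.mem_image, mem_univ, true_and]
      rintro ⟨f, hf⟩
      exact hwne f hf),
      Finset.card_image_of_injective _ huinj, Finset.card_univ, Fintype.card_fun]
    simp
  calc n ^ n + 1 = C.card := hcard.symm
    _ ≤ _ := hclique.card_le_cliqueNum


open SimpleGraph Finset in
lemma cliqueNum_ORpow_complete (n t : ℕ) :
    (ORpow (completeGraph (Fin n)) t).cliqueNum = n ^ t := by
  classical
  have hclique : (ORpow (completeGraph (Fin n)) t).IsClique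
      ((univ : Finset (Fin t → Fin n)) : Set _) := by
    intro a _ b _ hab
    obtain ⟨i, hi⟩ := Function.ne_iff.mp hab
    exact ⟨i, hi⟩
  apply le_antisymm
  · obtain ⟨s, hs⟩ := (ORpow (completeGraph (Fin n)) t).exists_isNClique_cliqueNum
    rw [← hs.card_eq]
    calc s.card ≤ Fintype.card (Fin t → Fin n) := Finset.card_le_univ s
      _ = n ^ t := by simp [Fintype.card_fun]
  · calc n ^ t = (univ : Finset (Fin t → Fin n)).card := by simp [Fintype.card_fun]
      _ ≤ _ := hclique.card_le_cliqueNum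


open SimpleGraph Finset Filter in
/-- `C_OR(M(K_n)) ≥ (n^n+1)^(1/n) > n = C_OR(K_n)` for `n ≥ 2`, where the Shannon
OR-capacity is the limit of `ω(G^t)^(1/t)` (bundled here as a `Tendsto` hypothesis,
resp. claim for `K_n`). -/
theorem shannonORcapacity_mycielskian_completeGraph (n : ℕ) (hn : 2 ≤ n) (c : ℝ)
    (hc : Tendsto
      (fun t : ℕ => ((ORpow (mycielskian (completeGraph (Fin n))) t).cliqueNum : ℝ) ^ ((1 : ℝ) / t))
      atTop (nhds c)) :
    ((n : ℝ) ^ n + 1) ^ ((1 : ℝ) / n) ≤ c ∧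
    (n : ℝ) < ((n : ℝ) ^ n + 1) ^ ((1 : ℝ) / n) ∧
    Tendsto (fun t : ℕ => ((ORpow (completeGraph (Fin n)) t).cliqueNum : ℝ) ^ ((1 : ℝ) / t))
      atTop (nhds (n : ℝ)) := by
  have hnR : (0 : ℝ) < n := by exact_mod_cast (by omega : 0 < n)
  refine ⟨?_, ?_, ?_⟩
  · -- part 1
    have key : ∀ k : ℕ,
        (n ^ n + 1) ^ k ≤ (ORpow (mycielskian (completeGraph (Fin n))) (n * k)).cliqueNum :=
      fun k => le_trans (Nat.pow_le_pow_left (myc_cliqueNum n hn) k)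
        (cliqueNum_ORpow_mul _ n k)
    have hmono : Tendsto (fun k : ℕ => n * k) atTop atTop :=
      tendsto_atTop_mono (fun k => Nat.le_mul_of_pos_left k (by omega)) tendsto_id
    have hsub := hc.comp hmono
    refine ge_of_tendsto hsub ?_
    filter_upwards [eventually_ge_atTop 1] with k hk
    have hkR : (0 : ℝ) < k := by exact_mod_cast (by omega : 0 < k)
    set b : ℝ := ((n ^ n + 1 : ℕ) : ℝ) with hb
    have hb0 : (0 : ℝ) ≤ b := by positivity
    have step1 : ((n : ℝ) ^ n + 1) = b := by rw [hb]; push_cast; ring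
    have step2 : b ^ ((1 : ℝ) / n) = (b ^ (k : ℕ)) ^ ((1 : ℝ) / ((n * k : ℕ) : ℝ)) := by
      rw [← Real.rpow_natCast b k, ← Real.rpow_mul hb0]
      congr 1
      push_cast
      field_simp
    have step3 : (b ^ (k : ℕ)) ^ ((1 : ℝ) / ((n * k : ℕ) : ℝ))
        ≤ ((ORpow (mycielskian (completeGraph (Fin n))) (n * k)).cliqueNum : ℝ)
            ^ ((1 : ℝ) / ((n * k : ℕ) : ℝ)) := by
      apply Real.rpow_le_rpow (by positivity) _ (by positivity)
      rw [hb, ← Nat.cast_pow]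
      exact_mod_cast key k
    calc ((n : ℝ) ^ n + 1) ^ ((1 : ℝ) / n) = b ^ ((1 : ℝ) / n) := by rw [step1]
      _ = (b ^ (k : ℕ)) ^ ((1 : ℝ) / ((n * k : ℕ) : ℝ)) := step2
      _ ≤ _ := step3
  · -- part 2
    calc (n : ℝ) = ((n : ℝ) ^ n) ^ ((1 : ℝ) / n) := by
          rw [← Real.rpow_natCast (n : ℝ) n, ← Real.rpow_mul hnR.le, mul_one_div,
            div_self (ne_of_gt hnR), Real.rpow_one]
      _ < _ := Real.rpow_lt_rpow (by positivity) (lt_add_one _) (by positivity)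
  · -- part 3
    have heq : ∀ t : ℕ, 1 ≤ t →
        ((ORpow (completeGraph (Fin n)) t).cliqueNum : ℝ) ^ ((1 : ℝ) / t) = n := by
      intro t ht
      have htR : (0 : ℝ) < t := by exact_mod_cast (by omega : 0 < t)
      rw [cliqueNum_ORpow_complete, Nat.cast_pow, ← Real.rpow_natCast (n : ℝ) t,
        ← Real.rpow_mul hnR.le, mul_one_div, div_self (ne_of_gt htR), Real.rpow_one]
    refine Tendsto.congr' ?_ (tendsto_const_nhds (x := (n : ℝ)))
    exact eventually_atTop.2 ⟨1, fun t ht => (heq t ht).symm⟩
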